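/- For compensable processes under any of the three semantics κ ∈ {D,P,A}, the extraction function distributes over structural congruence: if P ≡ Q then extr_κ(P) ≡ extr_κ(Q), where ≡ is the structural congruence of compensable processes. -/
import Mathlib


/-! Common development: compensable processes, adaptable processes,
    extraction functions, structural congruences, LTS, reduction, encodings. -/

/-- Names used in adaptable processes: source names plus reserved names. -/
inductive Name where
  | src : ℕ → Name
  | p : List ℕ → Name
  | beta : List ℕ → Name
  | l : ℕ → Name
  | k : ℕ → Name
  | m : ℕ → Name
  | gam : ℕ → Name
  | z : Name
  | u : Name
  | v : Name
  | v1 : Name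
  | f : Name
  | g : Name
  | aN : Name
  | jN : Name
deriving DecidableEq

/-- Prefixes of compensable processes. -/
inductive CPre where
  | inp : ℕ → CPre
  | out : ℕ → CPre
deriving DecidableEq

/-- Compensable processes (with dynamic compensations). -/
inductive CP where
  | nil : CP
  | pre : CPre → CP → CP
  | rep : CP → CP
  | res : ℕ → CP → CP
  | par : CP → CP → CP
  | trans : ℕ → CP → CP → CP      -- t[P,Q]
  | block : CP → CP               -- ⟨P⟩
  | var : ℕ → CP
  | inst : ℕ → CP → CP → CP       -- inst⌊λX.R⌋.P
deriving DecidableEq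

namespace CP

/-- Discarding extraction. -/
def extrD : CP → CP
  | .trans _ _ _ => .nil
  | .block P => .block P
  | .par P Q => .par (extrD P) (extrD Q)
  | .res a P => .res a (extrD P)
  | _ => .nil

/-- Preserving extraction. -/
def extrP : CP → CP
  | .trans t P Q => .trans t P Q
  | .block P => .block P
  | .par P Q => .par (extrP P) (extrP Q)
  | .res a P => .res a (extrP P)
  | _ => .nil

/-- Aborting extraction. -/
def extrA : CP → CP
  | .trans _ P Q => .par (extrA P) (.block Q)
  | .block P => .block P
  | .par P Q => .par (extrA P) (extrA Q)
  | .res a P => .res a (extrA P)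
  | _ => .nil

/-- Number of top-level protected blocks (discarding count). -/
def npbD : CP → ℕ
  | .block _ => 1
  | .par P Q => npbD P + npbD Q
  | .res _ P => npbD P
  | _ => 0

/-- Number of protected blocks, aborting count. -/
def npbA : CP → ℕ
  | .block _ => 1
  | .trans _ P _ => npbA P + 1
  | .par P Q => npbA P + npbA Q
  | .res _ P => npbA P
  | _ => 0

/-- Number of top-level transactions. -/
def nt : CP → ℕ
  | .trans _ P _ => nt P + 1
  | .par P Q => nt P + nt Q
  | .res _ P => nt P
  | _ => 0

/-- Number of all (also nested) transactions. -/
def ntAll : CP → ℕ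
  | .trans _ P Q => ntAll P + ntAll Q + 1
  | .par P Q => ntAll P + ntAll Q
  | .res _ P => ntAll P
  | .block P => ntAll P
  | .rep P => ntAll P
  | .pre _ P => ntAll P
  | .inst _ R P => ntAll R + ntAll P
  | _ => 0

/-- Sum over top-level transactions t[P,Q] of npbA P. -/
def sumTop : CP → ℕ
  | .trans _ P _ => npbA P
  | .par P Q => sumTop P + sumTop Q
  | .res _ P => sumTop P
  | _ => 0

/-- Free process variables. -/
def fvC : CP → Finset ℕ
  | .nil => ∅
  | .pre _ P => fvC P
  | .rep P => fvC P
  | .res _ P => fvC P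
  | .par P Q => fvC P ∪ fvC Q
  | .trans _ P Q => fvC P ∪ fvC Q
  | .block P => fvC P
  | .var X => {X}
  | .inst X R P => (fvC R).erase X ∪ fvC P

/-- Free names. -/
def fnC : CP → Finset ℕ
  | .nil => ∅
  | .pre (.inp a) P => insert a (fnC P)
  | .pre (.out a) P => insert a (fnC P)
  | .rep P => fnC P
  | .res a P => (fnC P).erase a
  | .par P Q => fnC P ∪ fnC Q
  | .trans t P Q => insert t (fnC P ∪ fnC Q)
  | .block P => fnC P
  | .var _ => ∅
  | .inst _ R P => fnC R ∪ fnC P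

/-- All names (free and bound). -/
def namesC : CP → Finset ℕ
  | .nil => ∅
  | .pre (.inp a) P => insert a (namesC P)
  | .pre (.out a) P => insert a (namesC P)
  | .rep P => namesC P
  | .res a P => insert a (namesC P)
  | .par P Q => namesC P ∪ namesC Q
  | .trans t P Q => insert t (namesC P ∪ namesC Q)
  | .block P => namesC P
  | .var _ => ∅
  | .inst _ R P => namesC R ∪ namesC P

/-- Renaming of a free name `a` to `b`. -/
def renameC (a b : ℕ) : CP → CP
  | .nil => .nil
  | .pre (.inp c) P => .pre (.inp (if c = a then b else c)) (renameC a b P)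
  | .pre (.out c) P => .pre (.out (if c = a then b else c)) (renameC a b P)
  | .rep P => .rep (renameC a b P)
  | .res c P => if c = a then .res c P else .res c (renameC a b P)
  | .par P Q => .par (renameC a b P) (renameC a b Q)
  | .trans t P Q => .trans (if t = a then b else t) (renameC a b P) (renameC a b Q)
  | .block P => .block (renameC a b P)
  | .var X => .var X
  | .inst X R P => .inst X (renameC a b R) (renameC a b P)

/-- Capture-avoiding substitution of process `Q` for variable `X` in `R`. -/
def csubst (R : CP) (X : ℕ) (Q : CP) : CP :=
  match R with
  | .nil => .nil
  | .pre π P => .pre π (csubst P X Q)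
  | .rep P => .rep (csubst P X Q)
  | .res a P => .res a (csubst P X Q)
  | .par P1 P2 => .par (csubst P1 X Q) (csubst P2 X Q)
  | .trans t P1 Q1 => .trans t (csubst P1 X Q) (csubst Q1 X Q)
  | .block P => .block (csubst P X Q)
  | .var Y => if Y = X then Q else .var Y
  | .inst Y R1 P => if Y = X then .inst Y R1 (csubst P X Q)
                    else .inst Y (csubst R1 X Q) (csubst P X Q)

/-- `P` has no pending compensation update at top level. -/
def noComp : CP → Prop
  | .inst _ _ _ => False
  | .par P Q => noComp P ∧ noComp Q
  | .res _ P => noComp P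
  | .block P => noComp P
  | .trans _ P _ => noComp P
  | .rep P => noComp P
  | _ => True

/-- Structural congruence on compensable processes. -/
inductive SCc : CP → CP → Prop where
  | refl (P) : SCc P P
  | symm {P Q} : SCc P Q → SCc Q P
  | trans {P Q R} : SCc P Q → SCc Q R → SCc P R
  | cpre {P P'} (π) : SCc P P' → SCc (.pre π P) (.pre π P')
  | crep {P P'} : SCc P P' → SCc (.rep P) (.rep P')
  | cres {P P'} (a) : SCc P P' → SCc (.res a P) (.res a P')
  | cpar {P P' Q Q'} : SCc P P' → SCc Q Q' → SCc (.par P Q) (.par P' Q')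
  | ctrans {P P' Q Q'} (t) : SCc P P' → SCc Q Q' → SCc (.trans t P Q) (.trans t P' Q')
  | cblock {P P'} : SCc P P' → SCc (.block P) (.block P')
  | cinst {R R' P P'} (X) : SCc R R' → SCc P P' → SCc (.inst X R P) (.inst X R' P')
  | parComm (P Q) : SCc (.par P Q) (.par Q P)
  | parAssoc (P Q R) : SCc (.par P (.par Q R)) (.par (.par P Q) R)
  | parNil (P) : SCc (.par P .nil) P
  | resSwap (a b P) : SCc (.res a (.res b P)) (.res b (.res a P))
  | scopeExt (a P Q) : a ∉ fnC Q → SCc (.par (.res a P) Q) (.res a (.par P Q))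
  | resNil (a) : SCc (.res a .nil) .nil
  | blockBlock (P) : SCc (.block (.block P)) (.block P)
  | blockRes (a P) : SCc (.block (.res a P)) (.res a (.block P))
  | blockNil : SCc (.block .nil) .nil
  | transRes (t a P Q) : t ≠ a → a ∉ fnC Q →
      SCc (.trans t (.res a P) Q) (.res a (.trans t P Q))
  | resOut (a) : SCc (.res a (.pre (.out a) .nil)) .nil
  | alpha (a b P) : b ∉ namesC P → SCc (.res a P) (.res b (renameC a b P))

/-- Labels of the LTS for compensable processes. -/
inductive Lab where
  | inp : ℕ → Lab
  | out : ℕ → Lab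
  | tau : Lab
  | cupd : ℕ → CP → Lab

/-- LTS of compensable processes under the discarding semantics. -/
inductive ltsD : CP → Lab → CP → Prop where
  | out (a P) : ltsD (.pre (.out a) P) (.out a) P
  | inp (a P) : ltsD (.pre (.inp a) P) (.inp a) P
  | rep {P α P'} : ltsD P α P' → ltsD (.rep P) α (.par P' (.rep P))
  | parL {P α P'} (Q) : ltsD P α P' → ltsD (.par P Q) α (.par P' Q)
  | parR {Q α Q'} (P) : ltsD Q α Q' → ltsD (.par P Q) α (.par P Q')
  | res {P α P'} (a) : ltsD P α P' → α ≠ .inp a → α ≠ .out a →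
      ltsD (.res a P) α (.res a P')
  | commL {P P' Q Q' a} : ltsD P (.inp a) P' → ltsD Q (.out a) Q' →
      ltsD (.par P Q) .tau (.par P' Q')
  | commR {P P' Q Q' a} : ltsD P (.out a) P' → ltsD Q (.inp a) Q' →
      ltsD (.par P Q) .tau (.par P' Q')
  | scopeOut {P α P'} (t Q) : ltsD P α P' → (∀ X R, α ≠ .cupd X R) → noComp P →
      ltsD (.trans t P Q) α (.trans t P' Q)
  | recoverOut {P} (t Q) : noComp P →
      ltsD (.trans t P Q) (.inp t) (.par (CP.extrD P) (.block Q))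
  | recoverIn {P P'} (t Q) : ltsD P (.out t) P' → noComp P →
      ltsD (.trans t P Q) .tau (.par (CP.extrD P') (.block Q))
  | block {P α P'} : ltsD P α P' → ltsD (.block P) α (.block P')
  | instR (X Q P) : ltsD (.inst X Q P) (.cupd X Q) P
  | scopeClose {P P' X R} (t Q) : ltsD P (.cupd X R) P' →
      ltsD (.trans t P Q) .tau (.trans t P' (csubst R X Q))

end CP

/-- Monadic contexts for compensable processes. -/
inductive CCtx where
  | hole : CCtx
  | block : CCtx → CCtx
  | trans : ℕ → CCtx → CP → CCtx
  | parL : CP → CCtx → CCtx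
  | parR : CCtx → CP → CCtx
  | res : ℕ → CCtx → CCtx

def CCtx.fill : CCtx → CP → CP
  | .hole, P => P
  | .block C, P => .block (C.fill P)
  | .trans t C Q, P => .trans t (C.fill P) Q
  | .parL R C, P => .par R (C.fill P)
  | .parR C R, P => .par (C.fill P) R
  | .res a C, P => .res a (C.fill P)

/-- Adaptable processes. -/
inductive AP where
  | loc : Name → AP → AP          -- l[P]
  | nil : AP
  | inp : Name → AP → AP          -- a.P
  | out : Name → AP → AP          -- ā.P
  | upd : Name → ℕ → AP → AP → AP -- l{(X).Q}.P  (template Q, continuation P)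
  | rep : AP → AP
  | par : AP → AP → AP
  | res : Name → AP → AP
  | var : ℕ → AP
deriving DecidableEq

namespace AP

/-- Free names of an adaptable process. -/
def fnA : AP → Finset Name
  | .loc l P => insert l (fnA P)
  | .nil => ∅
  | .inp a P => insert a (fnA P)
  | .out a P => insert a (fnA P)
  | .upd l _ T C => insert l (fnA T ∪ fnA C)
  | .rep P => fnA P
  | .par P Q => fnA P ∪ fnA Q
  | .res a P => (fnA P).erase a
  | .var _ => ∅

/-- All names of an adaptable process. -/
def namesA : AP → Finset Name
  | .loc l P => insert l (namesA P)
  | .nil => ∅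
  | .inp a P => insert a (namesA P)
  | .out a P => insert a (namesA P)
  | .upd l _ T C => insert l (namesA T ∪ namesA C)
  | .rep P => namesA P
  | .par P Q => namesA P ∪ namesA Q
  | .res a P => insert a (namesA P)
  | .var _ => ∅

/-- Free process variables of an adaptable process. -/
def fvA : AP → Finset ℕ
  | .loc _ P => fvA P
  | .nil => ∅
  | .inp _ P => fvA P
  | .out _ P => fvA P
  | .upd _ X T C => (fvA T).erase X ∪ fvA C
  | .rep P => fvA P
  | .par P Q => fvA P ∪ fvA Q
  | .res _ P => fvA P
  | .var X => {X}

/-- Capture-avoiding substitution of process `S` for variable `X`. -/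
def psubst : AP → ℕ → AP → AP
  | .loc l P, X, S => .loc l (psubst P X S)
  | .nil, _, _ => .nil
  | .inp a P, X, S => .inp a (psubst P X S)
  | .out a P, X, S => .out a (psubst P X S)
  | .upd l Y T C, X, S =>
      if Y = X then .upd l Y T (psubst C X S)
      else .upd l Y (psubst T X S) (psubst C X S)
  | .rep P, X, S => .rep (psubst P X S)
  | .par P Q, X, S => .par (psubst P X S) (psubst Q X S)
  | .res a P, X, S => .res a (psubst P X S)
  | .var Y, X, S => if Y = X then S else .var Y

def rn (a b c : Name) : Name := if c = a then b else c

/-- Renaming of a free name `a` to `b`. -/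
def renameA (a b : Name) : AP → AP
  | .loc l P => .loc (rn a b l) (renameA a b P)
  | .nil => .nil
  | .inp c P => .inp (rn a b c) (renameA a b P)
  | .out c P => .out (rn a b c) (renameA a b P)
  | .upd l X T C => .upd (rn a b l) X (renameA a b T) (renameA a b C)
  | .rep P => .rep (renameA a b P)
  | .par P Q => .par (renameA a b P) (renameA a b Q)
  | .res c P => if c = a then .res c P else .res c (renameA a b P)
  | .var X => .var X

/-- Structural congruence on adaptable processes. -/
inductive SCa : AP → AP → Prop where
  | refl (P) : SCa P P
  | symm {P Q} : SCa P Q → SCa Q P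
  | trans {P Q R} : SCa P Q → SCa Q R → SCa P R
  | cloc {P P'} (l) : SCa P P' → SCa (.loc l P) (.loc l P')
  | cinp {P P'} (a) : SCa P P' → SCa (.inp a P) (.inp a P')
  | cout {P P'} (a) : SCa P P' → SCa (.out a P) (.out a P')
  | cupd {T T' P P'} (l X) : SCa T T' → SCa P P' → SCa (.upd l X T P) (.upd l X T' P')
  | crep {P P'} : SCa P P' → SCa (.rep P) (.rep P')
  | cpar {P P' Q Q'} : SCa P P' → SCa Q Q' → SCa (.par P Q) (.par P' Q')
  | cres {P P'} (a) : SCa P P' → SCa (.res a P) (.res a P')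
  | parComm (P Q) : SCa (.par P Q) (.par Q P)
  | parAssoc (P Q R) : SCa (.par P (.par Q R)) (.par (.par P Q) R)
  | parNil (P) : SCa (.par P .nil) P
  | resNil (a) : SCa (.res a .nil) .nil
  | resSwap (a b P) : SCa (.res a (.res b P)) (.res b (.res a P))
  | scopeExt (a P Q) : a ∉ fnA Q → SCa (.par (.res a P) Q) (.res a (.par P Q))
  | resLoc (a l P) : SCa (.res a (.loc l P)) (.loc l (.res a P))
  | repUnfold (P) : SCa (.rep P) (.par P (.rep P))
  | alpha (a b P) : b ∉ namesA P → SCa (.res a P) (.res b (renameA a b P))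

end AP

/-- Monadic contexts for adaptable processes: C ::= [•] | C|P | l[C]. -/
inductive ACtx where
  | hole : ACtx
  | parL : ACtx → AP → ACtx
  | loc : Name → ACtx → ACtx

def ACtx.fill : ACtx → AP → AP
  | .hole, P => P
  | .parL C Q, P => .par (C.fill P) Q
  | .loc l C, P => .loc l (C.fill P)

/-- Reduction for adaptable processes. -/
inductive Red : AP → AP → Prop where
  | io (E C D : ACtx) (a : Name) (P Q : AP) :
      Red (E.fill (.par (C.fill (.out a P)) (D.fill (.inp a Q))))
          (E.fill (.par (C.fill P) (D.fill Q)))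
  | upd (E C D : ACtx) (l : Name) (P : AP) (X : ℕ) (Q R : AP) :
      Red (E.fill (.par (C.fill (.loc l P)) (D.fill (.upd l X Q R))))
          (E.fill (.par (C.fill (AP.psubst Q X P)) (D.fill R)))
  | par {P P' : AP} (Q) : Red P P' → Red (.par P Q) (.par P' Q)
  | res {P P' : AP} (a) : Red P P' → Red (.res a P) (.res a P')
  | str {P P' Q Q' : AP} : AP.SCa P P' → Red P' Q' → AP.SCa Q' Q → Red P Q

/-- Reflexive-transitive closure of reduction. -/
def RedStar : AP → AP → Prop := Relation.ReflTransGen Red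

/-! ### The discarding encoding of compensable processes into adaptable processes -/

/-- `kill t`: the update prefix t{(Y).0} killing location `t`. -/
def kill (t : ℕ) : AP := .upd (.src t) 0 .nil .nil

/-- `idu n`: the update prefix n{(X).X} deleting location name `n`. -/
def idu (n : Name) (cont : AP) : AP := .upd n 0 (.var 0) cont

/-- Body `p_ρ[X_1] | ... | p_ρ[X_n] | m̄_t.p_ρ[⟦Q⟧]` of the collector. -/
def bodyD (pρ mt : Name) (QE : AP) : ℕ → AP
  | 0 => .out mt (.loc pρ QE)
  | i+1 => .par (.loc pρ (.var i)) (bodyD pρ mt QE i)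

/-- Nested update templates of the collector:
    the chain of updates on `p_{t,ρ}` ending in the `z`-update. -/
def tmplD (pl : Name) (b : AP) (ntot : ℕ) : ℕ → AP
  | 0 => .upd Name.z ntot b .nil
  | i+1 => .upd pl i (tmplD pl b ntot i) .nil

/-- The collector `C_{⌊Q⌋}^{t,ρ,n}` (with `QE = ⟦Q⟧_ε` already encoded). -/
def collA (t : ℕ) (ρ : List ℕ) (QE : AP) : ℕ → AP
  | 0 => .par (.inp (.l t) (.out (.m t) (.loc (.p ρ) QE)))
              (.inp (.m t) (.out (.k t) (kill t)))
  | n+1 => .inp (.l t)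
      (.upd (.p (t::ρ)) n
        (tmplD (.p (t::ρ)) (bodyD (.p ρ) (.m t) QE (n+1)) (n+1) n)
        (.par (.loc .z .nil) (.inp (.m t) (.out (.k t) (kill t)))))

/-- Largest variable index occurring in a compensable process. -/
def maxVar : CP → ℕ
  | .nil => 0
  | .pre _ P => maxVar P
  | .rep P => maxVar P
  | .res _ P => maxVar P
  | .par P Q => max (maxVar P) (maxVar Q)
  | .trans _ P Q => max (maxVar P) (maxVar Q)
  | .block P => maxVar P
  | .var X => X
  | .inst X R P => max X (max (maxVar R) (maxVar P))

/-- The (discarding) encoding `⟦·⟧_ρ` of compensable processes into adaptable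
    processes, extended to dynamic compensations. -/
def encD : CP → List ℕ → AP
  | .block P, ρ => .loc (.p ρ) (encD P [])
  | .trans t P Q, ρ =>
      .par (.par (.loc (.src t) (encD P (t::ρ)))
                 (collA t ρ (encD Q []) (CP.npbD P)))
           (.inp (.src t) (.out (.l t) (.inp (.k t) .nil)))
  | .nil, _ => .nil
  | .par P1 P2, ρ => .par (encD P1 ρ) (encD P2 ρ)
  | .pre (.inp a) P, ρ => .inp (.src a) (encD P ρ)
  | .pre (.out a) P, ρ => .out (.src a) (encD P ρ)
  | .rep P, ρ => .rep (encD P ρ)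
  | .res a P, ρ => .res (.src a) (encD P ρ)
  | .var X, _ => .var X
  | .inst X R P, ρ0 =>
      let ρ := ρ0.tail
      let N := maxVar R + maxVar P + X + 1
      .par (.loc .u .nil)
        (.upd .v1 X
          (.par (.out .g
            (.upd .v N
              (.par (.var N)
                (.loc .v
                  (.upd .u (N+1)
                    (.par (.var (N+1))
                      (.par (.loc .v1 (encD R ρ))
                        (.inp .f (idu .v1 (idu .v (.inp .g .nil))))))
                    .nil)))
              .nil))
            (encD P ρ0))
          (.out .f (.par (.loc .v .nil) (.loc .v1 .nil))))

/-! ### Activation processes -/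

/-- Post-order traversal prepending prefixes `l̄_c.k_c` for every transaction. -/
def act : CP → AP → AP
  | .trans c P _, tail => act P (.out (.l c) (.inp (.k c) tail))
  | .par P Q, tail => act P (act Q tail)
  | .res _ P, tail => act P tail
  | .block P, tail => act P tail
  | .rep P, tail => act P tail
  | .pre _ P, tail => act P tail
  | .inst _ _ P, tail => act P tail
  | _, tail => tail

/-- Number of nodes (transactions) in the containment structure `St(P)`. -/
def ntSt : CP → ℕ
  | .trans _ P _ => ntSt P + 1
  | .par P Q => ntSt P + ntSt Q
  | .res _ P => ntSt P
  | .block P => ntSt P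
  | .rep P => ntSt P
  | .pre _ P => ntSt P
  | .inst _ _ P => ntSt P
  | _ => 0

/-- The activation process `T_t(P)`. -/
def actT (t : ℕ) (P : CP) : AP := act P (.out (.l t) (.inp (.k t) .nil))

/-- Number of prefixes on the sequential spine. -/
def prefCount : AP → ℕ
  | .inp _ P => prefCount P + 1
  | .out _ P => prefCount P + 1
  | _ => 0

/-- A sequential process: a chain of input/output prefixes ending in 0. -/
def isSeq : AP → Prop
  | .nil => True
  | .inp _ P => isSeq P
  | .out _ P => isSeq P
  | _ => False
namespace CP

lemma fn_extrD (P : CP) : fnC (extrD P) ⊆ fnC P := by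
  induction P with
  | pre π P ih => cases π <;> simp [extrD, fnC]
  | res a P ih => simpa [extrD, fnC] using Finset.erase_subset_erase _ ih
  | par P Q ihP ihQ => simpa [extrD, fnC] using Finset.union_subset_union ihP ihQ
  | block P ih => simp [extrD, fnC]
  | _ => simp [extrD, fnC]

lemma fn_extrP (P : CP) : fnC (extrP P) ⊆ fnC P := by
  induction P with
  | pre π P ih => cases π <;> simp [extrP, fnC]
  | res a P ih => simpa [extrP, fnC] using Finset.erase_subset_erase _ ih
  | par P Q ihP ihQ => simpa [extrP, fnC] using Finset.union_subset_union ihP ihQ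
  | block P ih => simp [extrP, fnC]
  | _ => simp [extrP, fnC]

lemma fn_extrA (P : CP) : fnC (extrA P) ⊆ fnC P := by
  induction P with
  | pre π P ih => cases π <;> simp [extrA, fnC]
  | res a P ih => simpa [extrA, fnC] using Finset.erase_subset_erase _ ih
  | par P Q ihP ihQ => simpa [extrA, fnC] using Finset.union_subset_union ihP ihQ
  | block P ih => simp [extrA, fnC]
  | trans t P Q ihP ihQ =>
      simp only [extrA, fnC]
      intro x hx
      rcases Finset.mem_union.1 hx with h | h
      · exact Finset.mem_insert_of_mem (Finset.mem_union_left _ (ihP h))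
      · exact Finset.mem_insert_of_mem (Finset.mem_union_right _ h)
  | _ => simp [extrA, fnC]

lemma names_extrD (P : CP) : namesC (extrD P) ⊆ namesC P := by
  induction P with
  | pre π P ih => cases π <;> simp [extrD, namesC]
  | res a P ih => simpa [extrD, namesC] using Finset.insert_subset_insert _ ih
  | par P Q ihP ihQ => simpa [extrD, namesC] using Finset.union_subset_union ihP ihQ
  | block P ih => simp [extrD, namesC]
  | _ => simp [extrD, namesC]

lemma names_extrP (P : CP) : namesC (extrP P) ⊆ namesC P := by
  induction P with
  | pre π P ih => cases π <;> simp [extrP, namesC]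
  | res a P ih => simpa [extrP, namesC] using Finset.insert_subset_insert _ ih
  | par P Q ihP ihQ => simpa [extrP, namesC] using Finset.union_subset_union ihP ihQ
  | block P ih => simp [extrP, namesC]
  | _ => simp [extrP, namesC]

lemma names_extrA (P : CP) : namesC (extrA P) ⊆ namesC P := by
  induction P with
  | pre π P ih => cases π <;> simp [extrA, namesC]
  | res a P ih => simpa [extrA, namesC] using Finset.insert_subset_insert _ ih
  | par P Q ihP ihQ => simpa [extrA, namesC] using Finset.union_subset_union ihP ihQ
  | block P ih => simp [extrA, namesC]
  | trans t P Q ihP ihQ =>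
      simp only [extrA, namesC]
      intro x hx
      rcases Finset.mem_union.1 hx with h | h
      · exact Finset.mem_insert_of_mem (Finset.mem_union_left _ (ihP h))
      · exact Finset.mem_insert_of_mem (Finset.mem_union_right _ h)
  | _ => simp [extrA, namesC]

lemma rename_extrD (a b : ℕ) (P : CP) :
    extrD (renameC a b P) = renameC a b (extrD P) := by
  induction P with
  | pre π P ih => cases π <;> simp [renameC, extrD]
  | res c P ih => by_cases h : c = a <;> simp [renameC, extrD, h, ih]
  | par P Q ihP ihQ => simp [renameC, extrD, ihP, ihQ]
  | block P ih => simp [renameC, extrD]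
  | _ => simp [renameC, extrD]

lemma rename_extrP (a b : ℕ) (P : CP) :
    extrP (renameC a b P) = renameC a b (extrP P) := by
  induction P with
  | pre π P ih => cases π <;> simp [renameC, extrP]
  | res c P ih => by_cases h : c = a <;> simp [renameC, extrP, h, ih]
  | par P Q ihP ihQ => simp [renameC, extrP, ihP, ihQ]
  | block P ih => simp [renameC, extrP]
  | _ => simp [renameC, extrP]

lemma rename_extrA (a b : ℕ) (P : CP) :
    extrA (renameC a b P) = renameC a b (extrA P) := by
  induction P with
  | pre π P ih => cases π <;> simp [renameC, extrA]
  | res c P ih => by_cases h : c = a <;> simp [renameC, extrA, h, ih]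
  | par P Q ihP ihQ => simp [renameC, extrA, ihP, ihQ]
  | block P ih => simp [renameC, extrA]
  | trans t P Q ihP ihQ => simp [renameC, extrA, ihP]
  | _ => simp [renameC, extrA]

end CP

/-- for each of the three semantics, the extraction function maps
    structurally congruent processes to structurally congruent processes. -/
theorem extr_congr {P Q : CP} (h : CP.SCc P Q) :
    CP.SCc (CP.extrD P) (CP.extrD Q) ∧
    CP.SCc (CP.extrP P) (CP.extrP Q) ∧
    CP.SCc (CP.extrA P) (CP.extrA Q) := by
  induction h with
  | refl P => exact ⟨.refl _, .refl _, .refl _⟩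
  | symm _ ih => exact ⟨ih.1.symm, ih.2.1.symm, ih.2.2.symm⟩
  | trans _ _ ih1 ih2 =>
      exact ⟨ih1.1.trans ih2.1, ih1.2.1.trans ih2.2.1, ih1.2.2.trans ih2.2.2⟩
  | cpre π h ih => exact ⟨.refl _, .refl _, .refl _⟩
  | crep h ih => exact ⟨.refl _, .refl _, .refl _⟩
  | cres a h ih => exact ⟨.cres a ih.1, .cres a ih.2.1, .cres a ih.2.2⟩
  | cpar h1 h2 ih1 ih2 =>
      exact ⟨.cpar ih1.1 ih2.1, .cpar ih1.2.1 ih2.2.1, .cpar ih1.2.2 ih2.2.2⟩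
  | ctrans t h1 h2 ih1 ih2 =>
      exact ⟨.refl _, .ctrans t h1 h2, .cpar ih1.2.2 (.cblock h2)⟩
  | cblock h ih => exact ⟨.cblock h, .cblock h, .cblock h⟩
  | cinst X h1 h2 ih1 ih2 => exact ⟨.refl _, .refl _, .refl _⟩
  | parComm P Q => exact ⟨.parComm _ _, .parComm _ _, .parComm _ _⟩
  | parAssoc P Q R => exact ⟨.parAssoc _ _ _, .parAssoc _ _ _, .parAssoc _ _ _⟩
  | parNil P => exact ⟨.parNil _, .parNil _, .parNil _⟩
  | resSwap a b P => exact ⟨.resSwap _ _ _, .resSwap _ _ _, .resSwap _ _ _⟩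
  | scopeExt a P Q h =>
      exact ⟨.scopeExt a _ _ (fun hm => h (CP.fn_extrD Q hm)),
             .scopeExt a _ _ (fun hm => h (CP.fn_extrP Q hm)),
             .scopeExt a _ _ (fun hm => h (CP.fn_extrA Q hm))⟩
  | resNil a => exact ⟨.resNil a, .resNil a, .resNil a⟩
  | blockBlock P => exact ⟨.blockBlock P, .blockBlock P, .blockBlock P⟩
  | blockRes a P => exact ⟨.blockRes a P, .blockRes a P, .blockRes a P⟩
  | blockNil => exact ⟨.blockNil, .blockNil, .blockNil⟩
  | transRes t a P Q hta haQ =>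
      refine ⟨(CP.SCc.resNil a).symm, .transRes t a P Q hta haQ, ?_⟩
      exact CP.SCc.scopeExt a (CP.extrA P) (.block Q) (by simpa [CP.fnC] using haQ)
  | resOut a => exact ⟨.resNil a, .resNil a, .resNil a⟩
  | alpha a b P hb =>
      refine ⟨?_, ?_, ?_⟩
      · simpa [CP.extrD, CP.rename_extrD] using
          CP.SCc.alpha a b (CP.extrD P) (fun hm => hb (CP.names_extrD P hm))
      · simpa [CP.extrP, CP.rename_extrP] using
          CP.SCc.alpha a b (CP.extrP P) (fun hm => hb (CP.names_extrP P hm))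
      · simpa [CP.extrA, CP.rename_extrA] using
          CP.SCc.alpha a b (CP.extrA P) (fun hm => hb (CP.names_extrA P hm))
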